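/- arXiv:2305.05601 — 3 statements merged into one kernel-verified Lean document; each statement's English description precedes it below -/
import Mathlib

section
/- Let p : ℝ^P → ℝ^C be differentiable with p_i(w) > 0 for all i and Σ_{i=1}^C p_i(w) = 1 for all w, and let F(w) be the Fisher information matrix. Then for every w ∈ ℝ^P the rank of F(w) is strictly less than C: rank F(w) ≤ C - 1. -/
/-!
The score vectors `∇ log p_i` have mean zero under `p`: `∑ p_i ∇ log p_i = ∑ ∇ p_i = ∇ (∑ p_i) = 0`.
Hence, with the scores as the columns of `G`, the Fisher matrix is `G * diagonal p * Gᵀ` and the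
nonzero vector `p` lies in the kernel of `G`, so `rank F ≤ rank G ≤ C - 1`.
-/

open Matrix

theorem Matrix.rank_lt_card_width_of_mulVec_eq_zero {m n R : Type*} [Field R] [Fintype n]
    {A : Matrix m n R} {v : n → R} (hv : v ≠ 0) (hAv : A *ᵥ v = 0) :
    A.rank < Fintype.card n := by
  have hker : 0 < Module.finrank R (LinearMap.ker A.mulVecLin) :=
    Module.finrank_pos_iff_exists_ne_zero.2 ⟨⟨v, hAv⟩, fun h => hv (congrArg Subtype.val h)⟩
  have hrank := LinearMap.finrank_range_add_finrank_ker A.mulVecLin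
  rw [Module.finrank_fintype_fun_eq_card] at hrank
  unfold rank
  omega

section Gradient

variable {F : Type*} [NormedAddCommGroup F] [InnerProductSpace ℝ F] [CompleteSpace F] {x : F}

theorem HasGradientAt.log {f : F → ℝ} {f' : F} (hf : HasGradientAt f f' x) (hx : f x ≠ 0) :
    HasGradientAt (fun y => Real.log (f y)) ((f x)⁻¹ • f') x := by
  rw [hasGradientAt_iff_hasFDerivAt] at *
  simpa using hf.log hx

theorem HasGradientAt.fun_sum {ι : Type*} {s : Finset ι} {f : ι → F → ℝ} {f' : ι → F}
    (hf : ∀ i ∈ s, HasGradientAt (f i) (f' i) x) :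
    HasGradientAt (fun y => ∑ i ∈ s, f i y) (∑ i ∈ s, f' i) x := by
  rw [hasGradientAt_iff_hasFDerivAt, map_sum]
  exact HasFDerivAt.fun_sum fun i hi => (hf i hi).hasFDerivAt

theorem sum_smul_gradient_log_eq_zero {ι : Type*} [Fintype ι] {p : F → ι → ℝ} {c : ℝ}
    (hdiff : ∀ i, DifferentiableAt ℝ (fun y => p y i) x) (hne : ∀ i, p x i ≠ 0)
    (hsum : ∀ y, ∑ i, p y i = c) :
    ∑ i, p x i • gradient (fun y => Real.log (p y i)) x = 0 := by
  have hgrad i : HasGradientAt (fun y => p y i) (gradient (fun y => p y i) x) x :=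
    (hdiff i).hasGradientAt
  have hconst : (fun y => ∑ i, p y i) = fun _ => c := funext hsum
  calc ∑ i, p x i • gradient (fun y => Real.log (p y i)) x
      = ∑ i, gradient (fun y => p y i) x := by
        refine Finset.sum_congr rfl fun i _ => ?_
        rw [((hgrad i).log (hne i)).gradient, smul_inv_smul₀ (hne i)]
    _ = 0 := by
        have hsum' := HasGradientAt.fun_sum fun i (_ : i ∈ Finset.univ) => hgrad i
        rw [hconst] at hsum'
        exact hsum'.unique (hasGradientAt_const x c)

end Gradient

theorem fisher_matrix_rank_lt_classes_general
    (C P : ℕ)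
    (p : EuclideanSpace ℝ (Fin P) → Fin C → ℝ)
    (hdiff : ∀ i, Differentiable ℝ fun w => p w i)
    (hpos : ∀ w i, 0 < p w i)
    (hsum : ∀ w, ∑ i, p w i = 1)
    (w : EuclideanSpace ℝ (Fin P))
    (F : Matrix (Fin P) (Fin P) ℝ)
    (hF : ∀ a b : Fin P,
      F a b = ∑ i, p w i *
        (gradient (fun w' => Real.log (p w' i)) w a *
         gradient (fun w' => Real.log (p w' i)) w b)) :
    F.rank < C := by
  set G : Matrix (Fin P) (Fin C) ℝ :=
    Matrix.of fun a i => gradient (fun w' => Real.log (p w' i)) w a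
  have hscore : G *ᵥ p w = 0 := by
    ext a
    have h := congrArg (· a)
      (sum_smul_gradient_log_eq_zero (fun i => hdiff i w) (fun i => (hpos w i).ne') hsum)
    simpa [G, mulVec, dotProduct, mul_comm] using h
  have hp : p w ≠ 0 := fun h => by simpa [h] using hsum w
  have hfactor : F = G * (diagonal (p w) * Gᵀ) := by
    ext a b
    rw [hF, mul_apply]
    simp only [diagonal_mul, G, of_apply, transpose_apply]
    exact Finset.sum_congr rfl fun i _ => mul_left_comm _ _ _
  calc F.rank ≤ G.rank := hfactor ▸ rank_mul_le_left _ _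
    _ < Fintype.card (Fin C) := rank_lt_card_width_of_mulVec_eq_zero hp hscore
    _ = C := Fintype.card_fin C

/-- Let `p : ℝ^P → ℝ^C` be differentiable with `p i (w) > 0` and
`∑ i, p i (w) = 1`, and let `F(w)` be the Fisher information matrix. Then for every `w`
the rank of `F(w)` is strictly less than `C`. -/
theorem fisher_matrix_rank_lt_classes
    (C P : ℕ) (hC : 1 ≤ C) (hP : 1 ≤ P)
    (p : EuclideanSpace ℝ (Fin P) → Fin C → ℝ)
    (hdiff : ∀ i, Differentiable ℝ fun w => p w i)
    (hpos : ∀ w i, 0 < p w i)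
    (hsum : ∀ w, ∑ i, p w i = 1)
    (w : EuclideanSpace ℝ (Fin P))
    (F : Matrix (Fin P) (Fin P) ℝ)
    (hF : ∀ a b : Fin P,
      F a b = ∑ i, p w i *
        (gradient (fun w' => Real.log (p w' i)) w a *
         gradient (fun w' => Real.log (p w' i)) w b)) :
    F.rank < C :=
  fisher_matrix_rank_lt_classes_general C P p hdiff hpos hsum w F hF
end

section
/- Let σ : ℝ → ℝ be a bounded, non-constant, continuous function. Then the set of σ-multilayer perceptrons from ℝ^n to ℝ is dense in C(ℝ^n, ℝ) for the topology of uniform convergence on compact sets: for every continuous function f : ℝ^n → ℝ, every compact set K ⊂ ℝ^n, and every ε > 0, there exists a σ-multilayer perceptron F : ℝ^n → ℝ such that sup_{x ∈ K} |f(x) - F(x)| < ε. -/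
/-!
Let `W` be the closed span in `C(K, ℝ)` of the ridge functions `x ↦ σ (a ⬝ᵥ x + θ)`. Mollifying
`σ` by a bump function `φ` keeps its ridge functions in `W` (they become `W`-valued integrals),
and differentiating `l ↦ (φ ⋆ σ) (l (a ⬝ᵥ x) + θ)` `k` times at `l = 0` shows
`(φ ⋆ σ)⁽ᵏ⁾(θ) • (a ⬝ᵥ x)ᵏ ∈ W`. Some such coefficient is nonzero: otherwise every mollification
of `σ` would be a polynomial of degree `< k`, hence so would be their pointwise limit `σ`, and a
bounded polynomial is constant. So `W` contains all powers of linear forms, hence by Weierstrass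
all `exp (a ⬝ᵥ x)`; these span a point-separating subalgebra, and Stone–Weierstrass gives
`W = C(K, ℝ)`. Finally, an element of the span of ridge functions is a network with one hidden
layer.
-/

open Matrix

/-- `IsMLPCore σ F` says that `F : ℝ^n → ℝ^m` is a `σ`-multilayer perceptron, i.e. of the
form `F = G ∘ (σ ∘ A_{L-1}) ∘ ⋯ ∘ (σ ∘ A_1)` with `L ≥ 1`, where all `A_i` and `G` are
affine maps (`x ↦ M x + b`) and `σ` is applied componentwise. The base case is `L = 1`
(a single affine map `G`); the inductive step prepends a hidden layer `σ ∘ A`. -/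
inductive IsMLPCore (σ : ℝ → ℝ) : ∀ {n m : ℕ}, ((Fin n → ℝ) → (Fin m → ℝ)) → Prop
  | affine {n m : ℕ} (M : Matrix (Fin m) (Fin n) ℝ) (b : Fin m → ℝ) :
      IsMLPCore σ (fun x => M.mulVec x + b)
  | comp {n k m : ℕ} (M : Matrix (Fin k) (Fin n) ℝ) (b : Fin k → ℝ)
      {F : (Fin k → ℝ) → (Fin m → ℝ)} (hF : IsMLPCore σ F) :
      IsMLPCore σ (fun x => F (fun i => σ (M.mulVec x i + b i)))

/-- `F : ℝ^n → ℝ` is a `σ`-multilayer perceptron with scalar output if it is obtained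
from a `σ`-MLP with values in `ℝ^1` by reading off the single coordinate. -/
def IsMLP (σ : ℝ → ℝ) {n : ℕ} (F : (Fin n → ℝ) → ℝ) : Prop :=
  ∃ Fc : (Fin n → ℝ) → (Fin 1 → ℝ), IsMLPCore σ Fc ∧ ∀ x, F x = Fc x 0

open MeasureTheory Filter Topology ContinuousMap
open scoped Convolution ContDiff

theorem integral_mem_of_isClosed {α E : Type*} [MeasurableSpace α] {μ : Measure α}
    [NormedAddCommGroup E] [NormedSpace ℝ E] [CompleteSpace E] {W : Submodule ℝ E}
    (hW : IsClosed (W : Set E)) {Φ : α → E} (hΦ : ∀ a, Φ a ∈ W) : ∫ a, Φ a ∂μ ∈ W := by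
  have := hW.completeSpace_coe
  rw [show Φ = fun a => W.subtypeₗᵢ ⟨Φ a, hΦ a⟩ from rfl, W.subtypeₗᵢ.integral_comp_comm]
  exact Subtype.prop _

theorem HasDerivAt.mem_of_forall_mem {𝕜 E : Type*} [NontriviallyNormedField 𝕜]
    [NormedAddCommGroup E] [NormedSpace 𝕜 E] {W : Submodule 𝕜 E} (hW : IsClosed (W : Set E))
    {Λ : 𝕜 → E} {Λ' : E} {l : 𝕜}
    (hΛ : HasDerivAt Λ Λ' l) (hmem : ∀ s, Λ s ∈ W) : Λ' ∈ W :=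
  hW.mem_of_tendsto hΛ.tendsto_slope <| Eventually.of_forall fun s =>
    W.smul_mem _ (W.sub_mem (hmem s) (hmem l))

theorem ContinuousMap.hasDerivAt_curry {X E : Type*} [TopologicalSpace X] [CompactSpace X]
    [NormedAddCommGroup E] [NormedSpace ℝ E] [CompleteSpace E] {F G : C(ℝ × X, E)}
    (hFG : ∀ l x, HasDerivAt (fun l => F (l, x)) (G (l, x)) l) (l : ℝ) :
    HasDerivAt F.curry (G.curry l) l := by
  have hFTC : F.curry = fun s => F.curry l + ∫ t in l..s, G.curry t := by
    funext s
    ext x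
    rw [add_apply, ← evalCLM_apply ℝ x (∫ t in l..s, G.curry t),
      ← (evalCLM ℝ x).intervalIntegral_comp_comm (G.curry.continuous.intervalIntegrable _ _)]
    simp only [evalCLM_apply, curry_apply]
    rw [intervalIntegral.integral_eq_sub_of_hasDerivAt (fun t _ => hFG t x)
      ((G.continuous.comp (.prodMk_left x)).intervalIntegrable _ _)]
    abel
  rw [hFTC]
  exact (G.curry.continuous.integral_hasStrictDerivAt l l).hasDerivAt.const_add _

section PolynomialFunctions

open Polynomial

noncomputable def polynomialFunctionsDegreeLT (k : ℕ) : Submodule ℝ (ℝ → ℝ) :=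
  (degreeLT ℝ k).map (LinearMap.pi leval)

theorem isClosed_polynomialFunctionsDegreeLT (k : ℕ) :
    IsClosed (polynomialFunctionsDegreeLT k : Set (ℝ → ℝ)) := by
  have := (degreeLTEquiv ℝ k).symm.finiteDimensional
  have : FiniteDimensional ℝ (polynomialFunctionsDegreeLT k) := Module.Finite.map _ _
  exact Submodule.closed_of_finiteDimensional _

theorem eq_sum_of_iteratedDeriv_eq_zero {f : ℝ → ℝ} {k : ℕ} (hf : ContDiff ℝ k f)
    (h : ∀ x, iteratedDeriv k f x = 0) (x : ℝ) :
    f x = ∑ j ∈ Finset.range k, iteratedDeriv j f 0 / j.factorial * x ^ j := by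
  rcases k with _ | n
  · simpa using h x
  rcases eq_or_ne x 0 with rfl | hx
  · simp [Finset.sum_range_succ']
  obtain ⟨y, -, hy⟩ := taylor_mean_remainder_lagrange_iteratedDeriv hx.symm
    (by exact_mod_cast hf.contDiffOn)
  rw [h, zero_mul, zero_div, sub_eq_zero, taylor_within_apply] at hy
  rw [hy]
  refine Finset.sum_congr rfl fun j hj => ?_
  rw [iteratedDerivWithin_eq_iteratedDeriv (uniqueDiffOn_uIcc hx.symm)
    (hf.contDiffAt.of_le (by exact_mod_cast (Finset.mem_range.1 hj).le)) Set.left_mem_uIcc]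
  simp only [sub_zero, smul_eq_mul]
  ring

theorem mem_polynomialFunctionsDegreeLT_of_iteratedDeriv_eq_zero {f : ℝ → ℝ} {k : ℕ}
    (hf : ContDiff ℝ k f) (h : ∀ x, iteratedDeriv k f x = 0) :
    f ∈ polynomialFunctionsDegreeLT k := by
  refine ⟨∑ j ∈ Finset.range k, (iteratedDeriv j f 0 / j.factorial) • X ^ j, ?_, ?_⟩
  · rw [SetLike.mem_coe, degreeLT_eq_span_X_pow]
    exact Submodule.sum_mem _ fun j hj =>
      Submodule.smul_mem _ _ (Submodule.subset_span (Finset.mem_image_of_mem _ hj))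
  · funext x
    simp [eq_sum_of_iteratedDeriv_eq_zero hf h x]

theorem eq_of_bounded_of_mem_polynomialFunctionsDegreeLT {f : ℝ → ℝ} {k : ℕ}
    (hf : f ∈ polynomialFunctionsDegreeLT k) (hb : ∃ B, ∀ t, |f t| ≤ B) (s t : ℝ) :
    f s = f t := by
  obtain ⟨p, -, rfl⟩ := hf
  obtain ⟨B, hB⟩ := hb
  have : p.degree ≤ 0 := (isBoundedUnder_abs_atTop_iff p).1 (isBoundedUnder_of ⟨B, hB⟩)
  rw [eq_C_of_degree_le_zero this]
  simp

end PolynomialFunctions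

namespace ContDiffBump

variable (φ : ContDiffBump (0 : ℝ))

noncomputable def mollify (g : C(ℝ, ℝ)) : C(ℝ, ℝ) :=
  ⟨φ.normed volume ⋆[ContinuousLinearMap.lsmul ℝ ℝ] g,
    φ.hasCompactSupport_normed.continuous_convolution_left _ φ.continuous_normed
      g.continuous.locallyIntegrable⟩

theorem contDiff_mollify (g : C(ℝ, ℝ)) : ContDiff ℝ ∞ (φ.mollify g) :=
  φ.hasCompactSupport_normed.contDiff_convolution_left (n := ⊤) _ φ.contDiff_normed
    g.continuous.locallyIntegrable

theorem mollify_comp_mem {X : Type*} [TopologicalSpace X] [CompactSpace X]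
    {W : Submodule ℝ C(X, ℝ)} (hW : IsClosed (W : Set C(X, ℝ))) {g : C(ℝ, ℝ)} {u : C(X, ℝ)}
    (hg : ∀ s, g.comp (u - const X s) ∈ W) : (φ.mollify g).comp u ∈ W := by
  have hΦ : Integrable fun s => φ.normed volume s • g.comp (u - const X s) :=
    (φ.continuous_normed.smul ((continuous_postcomp g).comp
      (continuous_const.sub continuous_const'))).integrable_of_hasCompactSupport
      φ.hasCompactSupport_normed.smul_right
  have : (φ.mollify g).comp u = ∫ s, φ.normed volume s • g.comp (u - const X s) := by
    ext x
    rw [integral_apply hΦ]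
    simp [mollify, convolution_def]
  rw [this]
  exact integral_mem_of_isClosed hW fun s => W.smul_mem _ (hg s)

end ContDiffBump

theorem exists_iteratedDeriv_mollify_ne_zero {σ : C(ℝ, ℝ)} (hσb : ∃ B, ∀ t, |σ t| ≤ B)
    (hσnc : ∃ s t, σ s ≠ σ t) (k : ℕ) :
    ∃ (φ : ContDiffBump (0 : ℝ)) (θ : ℝ), iteratedDeriv k (φ.mollify σ) θ ≠ 0 := by
  by_contra! h
  let φ : ℕ → ContDiffBump (0 : ℝ) := fun i =>
    ⟨1 / (i + 1), 2 / (i + 1), by positivity, by gcongr; norm_num⟩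
  have hφ : Tendsto (fun i => (φ i).rOut) atTop (𝓝 0) := by
    simpa [φ, div_eq_mul_inv] using
      (tendsto_one_div_add_atTop_nhds_zero_nat (𝕜 := ℝ)).const_mul 2
  have hlim : Tendsto (fun i => ⇑((φ i).mollify σ)) atTop (𝓝 σ) :=
    tendsto_pi_nhds.2 (ContDiffBump.convolution_tendsto_right_of_continuous hφ σ.continuous)
  have hσ : ⇑σ ∈ polynomialFunctionsDegreeLT k :=
    (isClosed_polynomialFunctionsDegreeLT k).mem_of_tendsto hlim <| Eventually.of_forall fun i =>
      mem_polynomialFunctionsDegreeLT_of_iteratedDeriv_eq_zero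
        (((φ i).contDiff_mollify σ).of_le (by exact_mod_cast le_top)) (h (φ i))
  obtain ⟨s, t, hst⟩ := hσnc
  exact hst (eq_of_bounded_of_mem_polynomialFunctionsDegreeLT hσ hσb s t)

section Ridge

variable {X : Type*} [TopologicalSpace X]

def ridgeSpan (L : Submodule ℝ C(X, ℝ)) (g : C(ℝ, ℝ)) : Submodule ℝ C(X, ℝ) :=
  Submodule.span ℝ {h | ∃ f ∈ L, ∃ θ : ℝ, g.comp (f + const X θ) = h}

def powMulRidge (f : C(X, ℝ)) (k : ℕ) (g : C(ℝ, ℝ)) (θ : ℝ) : C(ℝ × X, ℝ) :=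
  ⟨fun p => f p.2 ^ k * g (p.1 * f p.2 + θ), by fun_prop⟩

theorem hasDerivAt_powMulRidge {g g' : C(ℝ, ℝ)} (hg : ∀ t, HasDerivAt g (g' t) t)
    (f : C(X, ℝ)) (k : ℕ) (θ l : ℝ) (x : X) :
    HasDerivAt (fun l => powMulRidge f k g θ (l, x)) (powMulRidge f (k + 1) g' θ (l, x)) l := by
  have := ((hg _).comp l (((hasDerivAt_id l).mul_const (f x)).add_const θ)).const_mul (f x ^ k)
  refine this.congr_deriv ?_
  simp only [powMulRidge, coe_mk, id]
  ring

variable [CompactSpace X]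

theorem iteratedDeriv_smul_pow_mem {W : Submodule ℝ C(X, ℝ)} (hW : IsClosed (W : Set C(X, ℝ)))
    {ψ : C(ℝ, ℝ)} (hψ : ContDiff ℝ ∞ ψ) (f : C(X, ℝ)) (θ : ℝ)
    (h : ∀ l : ℝ, ψ.comp (l • f + const X θ) ∈ W) (k : ℕ) :
    iteratedDeriv k ψ θ • f ^ k ∈ W := by
  let g : ℕ → C(ℝ, ℝ) := fun j =>
    ⟨iteratedDeriv j ψ, hψ.continuous_iteratedDeriv j (by exact_mod_cast le_top)⟩
  have hg : ∀ j t, HasDerivAt (g j) (g (j + 1) t) t := fun j t => by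
    simp only [g, coe_mk, iteratedDeriv_succ]
    exact (hψ.differentiable_iteratedDeriv j (by exact_mod_cast WithTop.coe_lt_top _)
      t).hasDerivAt
  -- `(powMulRidge f j (g j) θ).curry` is the `j`-th derivative of `l ↦ ψ.comp (l • f + const X θ)`.
  have key : ∀ j l, (powMulRidge f j (g j) θ).curry l ∈ W := by
    intro j
    induction j with
    | zero =>
      intro l
      convert h l using 1
      ext x
      simp [powMulRidge, g]
    | succ j ih =>
      exact fun l => (hasDerivAt_curry (hasDerivAt_powMulRidge (hg j) f j θ) l).mem_of_forall_mem
        hW ih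
  convert key k 0 using 1
  ext x
  simp [powMulRidge, g, mul_comm]

theorem pow_mem_closure_ridgeSpan {L : Submodule ℝ C(X, ℝ)} {σ : C(ℝ, ℝ)}
    (hσb : ∃ B, ∀ t, |σ t| ≤ B) (hσnc : ∃ s t, σ s ≠ σ t) {f : C(X, ℝ)} (hf : f ∈ L) (k : ℕ) :
    f ^ k ∈ (ridgeSpan L σ).topologicalClosure := by
  set W := (ridgeSpan L σ).topologicalClosure
  have hW : IsClosed (W : Set C(X, ℝ)) := (ridgeSpan L σ).isClosed_topologicalClosure
  obtain ⟨φ, θ, hne⟩ := exists_iteratedDeriv_mollify_ne_zero hσb hσnc k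
  have hridge : ∀ l, (φ.mollify σ).comp (l • f + const X θ) ∈ W := fun l =>
    φ.mollify_comp_mem hW fun s => (ridgeSpan L σ).le_topologicalClosure <|
      Submodule.subset_span ⟨l • f, L.smul_mem l hf, θ - s, by ext; simp [add_sub_assoc]⟩
  simpa [hne] using
    W.smul_mem (iteratedDeriv k (φ.mollify σ) θ)⁻¹ <|
      iteratedDeriv_smul_pow_mem hW (φ.contDiff_mollify σ) f θ hridge k

theorem comp_mem_of_forall_pow_mem {W : Submodule ℝ C(X, ℝ)} (hW : IsClosed (W : Set C(X, ℝ)))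
    {f : C(X, ℝ)} (hf : ∀ k, f ^ k ∈ W) (g : C(ℝ, ℝ)) : g.comp f ∈ W := by
  refine hW.closure_subset (Metric.mem_closure_iff.2 fun ε hε => ?_)
  obtain ⟨p, hp⟩ :=
    exists_polynomial_near_of_continuousOn (-‖f‖) ‖f‖ g g.continuous.continuousOn ε hε
  refine ⟨Polynomial.aeval f p, ?_, (dist_lt_iff hε).2 fun x => ?_⟩
  · rw [Polynomial.aeval_eq_sum_range]
    exact W.sum_mem fun k _ => W.smul_mem _ (hf k)
  · rw [Real.dist_eq, Polynomial.aeval_continuousMap_apply, abs_sub_comm]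
    exact hp _ (abs_le.1 (f.norm_coe_le_norm x))

def expCompSubmonoid (L : Submodule ℝ C(X, ℝ)) : Submonoid C(X, ℝ) where
  carrier := {h | ∃ f ∈ L, (⟨Real.exp, Real.continuous_exp⟩ : C(ℝ, ℝ)).comp f = h}
  one_mem' := ⟨0, L.zero_mem, by ext; simp⟩
  mul_mem' := by
    rintro _ _ ⟨f, hf, rfl⟩ ⟨g, hg, rfl⟩
    exact ⟨f + g, L.add_mem hf hg, by ext; simp [Real.exp_add]⟩

theorem dense_ridgeSpan {L : Submodule ℝ C(X, ℝ)}
    (hL : ((⇑) '' (L : Set C(X, ℝ))).SeparatesPoints) {σ : C(ℝ, ℝ)}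
    (hσb : ∃ B, ∀ t, |σ t| ≤ B) (hσnc : ∃ s t, σ s ≠ σ t) :
    Dense (ridgeSpan L σ : Set C(X, ℝ)) := by
  let A := Algebra.adjoin ℝ (expCompSubmonoid L : Set C(X, ℝ))
  have hAW : (A : Set C(X, ℝ)) ⊆ (ridgeSpan L σ).topologicalClosure := by
    change Subalgebra.toSubmodule A ≤ _
    rw [Algebra.adjoin_eq_span, Submonoid.closure_eq, Submodule.span_le]
    rintro _ ⟨f, hf, rfl⟩
    exact comp_mem_of_forall_pow_mem (ridgeSpan L σ).isClosed_topologicalClosure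
      (pow_mem_closure_ridgeSpan hσb hσnc hf) _
  have hA : A.SeparatesPoints := by
    rintro x y hxy
    obtain ⟨_, ⟨f, hf, rfl⟩, hne⟩ := hL hxy
    exact ⟨_, ⟨_, Algebra.subset_adjoin ⟨f, hf, rfl⟩, rfl⟩, fun h => hne (Real.exp_injective h)⟩
  rw [dense_iff_closure_eq, ← Submodule.topologicalClosure_coe, Set.eq_univ_iff_forall]
  intro g
  refine closure_minimal hAW (ridgeSpan L σ).isClosed_topologicalClosure ?_
  rw [← A.topologicalClosure_coe, subalgebra_topologicalClosure_eq_top_of_separatesPoints A hA]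
  trivial

end Ridge

theorem isMLP_sum_ridge (σ : ℝ → ℝ) {n m : ℕ} (a : Fin m → Fin n → ℝ) (θ c : Fin m → ℝ) :
    IsMLP σ fun x => ∑ j, c j * σ (a j ⬝ᵥ x + θ j) :=
  ⟨_, .comp (.of a) θ (.affine (.of fun _ => c) 0), fun x => by simp [mulVec, dotProduct]⟩

def dotProductOn {n : ℕ} (K : Set (Fin n → ℝ)) : (Fin n → ℝ) →ₗ[ℝ] C(K, ℝ) where
  toFun a := ⟨fun x => a ⬝ᵥ x, by fun_prop⟩
  map_add' a b := by ext; simp [add_dotProduct]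
  map_smul' c a := by ext; simp [smul_dotProduct]

theorem separatesPoints_dotProductOn {n : ℕ} (K : Set (Fin n → ℝ)) :
    ((⇑) '' (LinearMap.range (dotProductOn K) : Set C(K, ℝ))).SeparatesPoints := by
  intro x y hxy
  obtain ⟨i, hi⟩ := Function.ne_iff.1 (Subtype.coe_injective.ne hxy)
  exact ⟨_, ⟨_, ⟨Pi.single i 1, rfl⟩, rfl⟩, by simpa [dotProductOn] using hi⟩

theorem exists_isMLP_eq_of_mem_ridgeSpan {σ : C(ℝ, ℝ)} {n : ℕ} {K : Set (Fin n → ℝ)}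
    {v : C(K, ℝ)} (hv : v ∈ ridgeSpan (LinearMap.range (dotProductOn K)) σ) :
    ∃ F : (Fin n → ℝ) → ℝ, IsMLP σ F ∧ ∀ x : K, F x = v x := by
  obtain ⟨m, c, g, rfl⟩ := Submodule.mem_span_set'.1 hv
  choose f hf θ hθ using fun j => (g j).2
  choose a ha using hf
  refine ⟨_, isMLP_sum_ridge σ a θ c, fun x => ?_⟩
  simp [← hθ, ← ha, dotProductOn]

/-- **Universal approximation, bounded non-constant continuous activation.**
Let `σ : ℝ → ℝ` be a bounded, non-constant, continuous function. Then the set of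
`σ`-multilayer perceptrons from `ℝ^n` to `ℝ` is dense in `C(ℝ^n, ℝ)` for the topology of
uniform convergence on compact sets: for every continuous `f : ℝ^n → ℝ`, every compact
`K ⊆ ℝ^n` and every `ε > 0` there is a `σ`-MLP `F` with `sup_{x ∈ K} |f x - F x| < ε`. -/
theorem mlp_universal_approximation
    (σ : ℝ → ℝ) (hσb : ∃ B : ℝ, ∀ t, |σ t| ≤ B)
    (hσnc : ∃ s t : ℝ, σ s ≠ σ t) (hσc : Continuous σ)
    (n : ℕ) (f : (Fin n → ℝ) → ℝ) (hf : Continuous f)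
    (K : Set (Fin n → ℝ)) (hK : IsCompact K) (ε : ℝ) (hε : 0 < ε) :
    ∃ F : (Fin n → ℝ) → ℝ, IsMLP σ F ∧ ∀ x ∈ K, |f x - F x| < ε := by
  have : CompactSpace K := isCompact_iff_compactSpace.1 hK
  obtain ⟨v, hv, hfv⟩ := (dense_ridgeSpan (separatesPoints_dotProductOn K)
    (σ := ⟨σ, hσc⟩) hσb hσnc).exists_dist_lt (⟨fun x => f x, by fun_prop⟩ : C(K, ℝ)) hε
  obtain ⟨F, hF, hFv⟩ := exists_isMLP_eq_of_mem_ridgeSpan hv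
  refine ⟨F, hF, fun x hx => ?_⟩
  rw [hFv ⟨x, hx⟩, ← Real.dist_eq]
  exact (dist_apply_le_dist ⟨x, hx⟩).trans_lt hfv
end

section
/- Let σ = ReLU, i.e., σ(t) = max(0, t). Then the set of ReLU-multilayer perceptrons from ℝ^n to ℝ is dense in C(ℝ^n, ℝ) for the topology of uniform convergence on compact sets: for every continuous function f : ℝ^n → ℝ, every compact set K ⊂ ℝ^n, and every ε > 0, there exists a ReLU-multilayer perceptron F : ℝ^n → ℝ such that sup_{x ∈ K} |f(x) - F(x)| < ε. -/
open Matrix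

/-!
By the lattice form of the Stone–Weierstrass theorem it suffices that scalar ReLU networks are
continuous, include the affine functions (which separate points strongly) and are closed under
`max` and `min`. Since `max a b = relu (a - b) + b` and `min a b = a - relu (a - b)`, the latter
comes down to evaluating two networks side by side. Networks of different depths can be run in
parallel because `relu t - relu (-t) = t`: an affine signal survives a hidden layer as the pair
`(relu t, relu (-t))`, so the shallower network waits while the deeper one computes.
-/

namespace AffineMap

variable {V : Type*} [AddCommGroup V] [Module ℝ V] {a b : ℕ}

def finAppend (f : V →ᵃ[ℝ] (Fin a → ℝ)) (g : V →ᵃ[ℝ] (Fin b → ℝ)) :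
    V →ᵃ[ℝ] (Fin (a + b) → ℝ) :=
  pi (Fin.append (fun i => (proj i).comp f) (fun i => (proj i).comp g))

@[simp]
theorem finAppend_apply (f : V →ᵃ[ℝ] (Fin a → ℝ)) (g : V →ᵃ[ℝ] (Fin b → ℝ)) (x : V) :
    f.finAppend g x = Fin.append (f x) (g x) := by
  ext i
  refine Fin.addCases (fun i => ?_) (fun i => ?_) i <;> simp [finAppend]

theorem eq_toMatrix'_mulVec_add {n m : ℕ} (A : (Fin n → ℝ) →ᵃ[ℝ] (Fin m → ℝ)) :
    ⇑A = fun x => LinearMap.toMatrix' A.linear *ᵥ x + A 0 := by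
  ext1 x
  rw [LinearMap.toMatrix'_mulVec]
  exact congrFun A.decomp x

end AffineMap

def affineOfMatrix {n m : ℕ} (M : Matrix (Fin m) (Fin n) ℝ) (b : Fin m → ℝ) :
    (Fin n → ℝ) →ᵃ[ℝ] (Fin m → ℝ) :=
  (toLin' M).toAffineMap + AffineMap.const ℝ _ b

@[simp]
theorem affineOfMatrix_apply {n m : ℕ} (M : Matrix (Fin m) (Fin n) ℝ) (b : Fin m → ℝ)
    (x : Fin n → ℝ) : affineOfMatrix M b x = M *ᵥ x + b := rfl

def finLeft (a b : ℕ) : (Fin (a + b) → ℝ) →ᵃ[ℝ] (Fin a → ℝ) :=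
  (LinearMap.funLeft ℝ ℝ (Fin.castAdd b)).toAffineMap

def finRight (a b : ℕ) : (Fin (a + b) → ℝ) →ᵃ[ℝ] (Fin b → ℝ) :=
  (LinearMap.funLeft ℝ ℝ (Fin.natAdd a)).toAffineMap

@[simp]
theorem finLeft_apply {a b : ℕ} (y : Fin (a + b) → ℝ) :
    finLeft a b y = fun i => y (Fin.castAdd b i) := rfl

@[simp]
theorem finRight_apply {a b : ℕ} (y : Fin (a + b) → ℝ) :
    finRight a b y = fun i => y (Fin.natAdd a i) := rfl

def relu (t : ℝ) : ℝ := max 0 t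

theorem continuous_relu : Continuous relu :=
  continuous_const.max continuous_id

theorem relu_sub_relu_neg (t : ℝ) : relu t - relu (-t) = t := by
  rw [relu, relu, max_comm, max_comm 0]
  exact max_zero_sub_max_neg_zero_eq_self t

theorem max_eq_relu_sub_add (a b : ℝ) : max a b = relu (a - b) + b := by
  simp only [relu, max_def]; split_ifs <;> linarith

theorem min_eq_sub_relu_sub (a b : ℝ) : min a b = a - relu (a - b) := by
  simp only [relu, min_def, max_def]; split_ifs <;> linarith

namespace IsMLPCore

variable {σ : ℝ → ℝ}

theorem of_affineMap {n m : ℕ} (A : (Fin n → ℝ) →ᵃ[ℝ] (Fin m → ℝ)) : IsMLPCore σ A :=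
  A.eq_toMatrix'_mulVec_add ▸ affine _ _

theorem layer {n k m : ℕ} {F : (Fin k → ℝ) → (Fin m → ℝ)} (hF : IsMLPCore σ F)
    (A : (Fin n → ℝ) →ᵃ[ℝ] (Fin k → ℝ)) : IsMLPCore σ (fun x => F (fun i => σ (A x i))) := by
  rw [A.eq_toMatrix'_mulVec_add]
  exact comp _ _ hF

theorem activation {k : ℕ} : IsMLPCore σ (fun y : Fin k → ℝ => fun i => σ (y i)) :=
  (of_affineMap (AffineMap.id ℝ _)).layer (AffineMap.id ℝ _)

theorem comp_affineMap {n k m : ℕ} {F : (Fin k → ℝ) → (Fin m → ℝ)} (hF : IsMLPCore σ F)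
    (A : (Fin n → ℝ) →ᵃ[ℝ] (Fin k → ℝ)) : IsMLPCore σ (fun x => F (A x)) := by
  cases hF with
  | affine M b => exact of_affineMap ((affineOfMatrix M b).comp A)
  | comp M b hF' => exact hF'.layer ((affineOfMatrix M b).comp A)

theorem compose {n k m : ℕ} {H : (Fin k → ℝ) → (Fin m → ℝ)} {F : (Fin n → ℝ) → (Fin k → ℝ)}
    (hH : IsMLPCore σ H) (hF : IsMLPCore σ F) : IsMLPCore σ (fun x => H (F x)) := by
  induction hF with
  | affine M b => exact hH.comp_affineMap (affineOfMatrix M b)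
  | comp M b _ ih => exact (ih hH).layer (affineOfMatrix M b)

theorem continuous (hσ : Continuous σ) {n m : ℕ} {F : (Fin n → ℝ) → (Fin m → ℝ)}
    (hF : IsMLPCore σ F) : Continuous F := by
  induction hF with
  | affine M b => fun_prop
  | comp M b _ ih => exact ih.comp (continuous_pi fun i => hσ.comp (by fun_prop))

theorem append_affineMap {k m n p : ℕ} {F : (Fin k → ℝ) → (Fin m → ℝ)}
    (hF : IsMLPCore relu F) (B : (Fin n → ℝ) →ᵃ[ℝ] (Fin k → ℝ))
    (L : (Fin n → ℝ) →ᵃ[ℝ] (Fin p → ℝ)) :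
    IsMLPCore relu (fun x => Fin.append (F (B x)) (L x)) := by
  induction hF generalizing n p with
  | affine M b =>
    convert of_affineMap (((affineOfMatrix M b).comp B).finAppend L) using 1
    ext1 x
    simp
  | @comp k k₁ m M b F' _ ih =>
    -- the hidden layer sees `(M (B x) + b, L x, -L x)`, and `L x = relu (L x) - relu (-L x)`
    have := (ih (finLeft k₁ (p + p)) ((finLeft p p).comp (finRight k₁ (p + p)) -
      (finRight p p).comp (finRight k₁ (p + p)))).layer
        (((affineOfMatrix M b).comp B).finAppend (L.finAppend (-L)))
    convert this using 2 with x
    simp only [affineOfMatrix_apply, AffineMap.finAppend_apply, finLeft_apply, finRight_apply,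
      Fin.append_left, Fin.append_right, AffineMap.coe_comp, AffineMap.coe_sub,
      Function.comp_apply, Pi.sub_apply]
    congr 1
    ext i
    exact (relu_sub_relu_neg (L x i)).symm

theorem append {n m p : ℕ} {F : (Fin n → ℝ) → (Fin m → ℝ)} {G : (Fin n → ℝ) → (Fin p → ℝ)}
    (hF : IsMLPCore relu F) (hG : IsMLPCore relu G) :
    IsMLPCore relu (fun x => Fin.append (F x) (G x)) := by
  -- `x ↦ (G x, x)`, followed by `(u, y) ↦ (F y, u)`
  have graph := hG.append_affineMap (AffineMap.id ℝ _) (AffineMap.id ℝ _)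
  simpa using (hF.append_affineMap (finRight p n) (finLeft p n)).compose graph

end IsMLPCore

namespace IsMLP

variable {σ : ℝ → ℝ} {n : ℕ} {F G : (Fin n → ℝ) → ℝ}

theorem continuous (hσ : Continuous σ) (hF : IsMLP σ F) : Continuous F := by
  obtain ⟨Fc, hFc, hF⟩ := hF
  rw [funext hF]
  exact (continuous_apply 0).comp (hFc.continuous hσ)

theorem activation_comp (hF : IsMLP σ F) : IsMLP σ (fun x => σ (F x)) := by
  obtain ⟨Fc, hFc, hF⟩ := hF
  exact ⟨_, IsMLPCore.activation.compose hFc, fun x => congrArg σ (hF x)⟩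

theorem const_mul_add_const_mul (hF : IsMLP relu F) (hG : IsMLP relu G) (a b : ℝ) :
    IsMLP relu (fun x => a * F x + b * G x) := by
  obtain ⟨Fc, hFc, hF⟩ := hF
  obtain ⟨Gc, hGc, hG⟩ := hG
  let T : (Fin (1 + 1) → ℝ) →ₗ[ℝ] (Fin 1 → ℝ) := LinearMap.pi fun _ =>
    a • LinearMap.proj (Fin.castAdd 1 0) + b • LinearMap.proj (Fin.natAdd 1 0)
  refine ⟨_, (IsMLPCore.of_affineMap T.toAffineMap).compose (hFc.append hGc), fun x => ?_⟩
  simp only [T, LinearMap.coe_toAffineMap, LinearMap.pi_apply, LinearMap.add_apply,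
    LinearMap.smul_apply, LinearMap.proj_apply, Fin.append_left, Fin.append_right, smul_eq_mul,
    hF, hG]

theorem relu_sub (hF : IsMLP relu F) (hG : IsMLP relu G) :
    IsMLP relu (fun x => relu (F x - G x)) := by
  simpa [sub_eq_add_neg] using (hF.const_mul_add_const_mul hG 1 (-1)).activation_comp

theorem sup (hF : IsMLP relu F) (hG : IsMLP relu G) : IsMLP relu (F ⊔ G) := by
  convert (hF.relu_sub hG).const_mul_add_const_mul hG 1 1 using 1
  ext x
  simp [max_eq_relu_sub_add]

theorem inf (hF : IsMLP relu F) (hG : IsMLP relu G) : IsMLP relu (F ⊓ G) := by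
  convert hF.const_mul_add_const_mul (hF.relu_sub hG) 1 (-1) using 1
  ext x
  simp [min_eq_sub_relu_sub, sub_eq_add_neg]

end IsMLP

def reluMLPSublattice (n : ℕ) : Sublattice ((Fin n → ℝ) → ℝ) where
  carrier := {F | IsMLP relu F}
  supClosed' _ hF _ hG := hF.sup hG
  infClosed' _ hF _ hG := hF.inf hG

theorem isMLP_dotProduct_add {σ : ℝ → ℝ} {n : ℕ} (w : Fin n → ℝ) (d : ℝ) :
    IsMLP σ (fun x => w ⬝ᵥ x + d) :=
  ⟨_, IsMLPCore.affine (Matrix.of fun _ : Fin 1 => w) (fun _ => d), fun x => by simp [mulVec]⟩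

theorem exists_dotProduct_add_eq {n : ℕ} {x y : Fin n → ℝ} {a b : ℝ} (h : x = y → a = b) :
    ∃ (w : Fin n → ℝ) (d : ℝ), w ⬝ᵥ x + d = a ∧ w ⬝ᵥ y + d = b := by
  by_cases hxy : x = y
  · exact ⟨0, a, by simp [← h hxy, hxy]⟩
  obtain ⟨i, hi⟩ := Function.ne_iff.mp hxy
  have hi' : y i - x i ≠ 0 := sub_ne_zero.mpr (Ne.symm hi)
  set c := (b - a) / (y i - x i)
  have hw (z : Fin n → ℝ) : (c • Pi.single i 1) ⬝ᵥ z = c * z i := by simp [smul_dotProduct]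
  refine ⟨c • Pi.single i 1, a - c * x i, by rw [hw]; ring, ?_⟩
  rw [hw]
  calc c * y i + (a - c * x i) = c * (y i - x i) + a := by ring
    _ = b := by rw [div_mul_cancel₀ _ hi']; ring

theorem Sublattice.exists_forall_abs_sub_lt {X : Type*} [TopologicalSpace X]
    (S : Sublattice (X → ℝ)) (hS : (S : Set (X → ℝ)).Nonempty) (hcont : ∀ F ∈ S, Continuous F)
    (hsep : ∀ (v : X → ℝ) (x y : X), ∃ F ∈ S, F x = v x ∧ F y = v y)
    {f : X → ℝ} (hf : Continuous f) {K : Set X} (hK : IsCompact K) {ε : ℝ} (hε : 0 < ε) :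
    ∃ F ∈ S, ∀ x ∈ K, |f x - F x| < ε := by
  have : CompactSpace K := isCompact_iff_compactSpace.mp hK
  let L : Set C(K, ℝ) := {g | ∃ F ∈ S, ∀ x : K, g x = F x}
  have hL : closure L = ⊤ := by
    refine ContinuousMap.sublattice_closure_eq_top L ?_ ?_ ?_ ?_
    · obtain ⟨F, hF⟩ := hS
      exact ⟨ContinuousMap.restrict K ⟨F, hcont F hF⟩, F, hF, fun _ => rfl⟩
    · rintro g ⟨F, hF, hgF⟩ h ⟨G, hG, hhG⟩
      exact ⟨F ⊓ G, S.infClosed hF hG, fun x => by simp [hgF, hhG]⟩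
    · rintro g ⟨F, hF, hgF⟩ h ⟨G, hG, hhG⟩
      exact ⟨F ⊔ G, S.supClosed hF hG, fun x => by simp [hgF, hhG]⟩
    · intro v x y
      obtain ⟨F, hF, hx, hy⟩ := hsep (Function.extend Subtype.val v 0) x y
      rw [Subtype.val_injective.extend_apply] at hx hy
      exact ⟨ContinuousMap.restrict K ⟨F, hcont F hF⟩, ⟨F, hF, fun _ => rfl⟩, hx, hy⟩
  let fK := ContinuousMap.restrict K ⟨f, hf⟩
  have hfK : fK ∈ closure L := by simp [hL]
  obtain ⟨g, ⟨F, hF, hgF⟩, hfg⟩ := Metric.mem_closure_iff.mp hfK ε hε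
  refine ⟨F, hF, fun x hx => ?_⟩
  calc |f x - F x| = dist (fK ⟨x, hx⟩) (g ⟨x, hx⟩) := by simp [Real.dist_eq, hgF, fK]
    _ ≤ dist fK g := ContinuousMap.dist_apply_le_dist _
    _ < ε := hfg

/-- **Universal approximation for the ReLU activation.** Let
`σ = ReLU`, i.e. `σ t = max 0 t`. Then the set of ReLU-multilayer perceptrons from `ℝ^n`
to `ℝ` is dense in `C(ℝ^n, ℝ)` for the topology of uniform convergence on compact sets:
for every continuous `f : ℝ^n → ℝ`, every compact `K ⊆ ℝ^n` and every `ε > 0` there is a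
ReLU-MLP `F` with `sup_{x ∈ K} |f x - F x| < ε`. -/
theorem relu_mlp_universal_approximation
    (n : ℕ) (f : (Fin n → ℝ) → ℝ) (hf : Continuous f)
    (K : Set (Fin n → ℝ)) (hK : IsCompact K) (ε : ℝ) (hε : 0 < ε) :
    ∃ F : (Fin n → ℝ) → ℝ, IsMLP (fun t => max 0 t) F ∧ ∀ x ∈ K, |f x - F x| < ε := by
  refine (reluMLPSublattice n).exists_forall_abs_sub_lt ⟨_, isMLP_dotProduct_add 0 0⟩
    (fun F hF => IsMLP.continuous continuous_relu hF) (fun v x y => ?_) hf hK hε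
  obtain ⟨w, d, hx, hy⟩ := exists_dotProduct_add_eq (congrArg v)
  exact ⟨_, isMLP_dotProduct_add w d, hx, hy⟩
end
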